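/- Let n > 6 and let S be an intersecting family of permutations in S(n) with |S| = (n−1)!. Then the characteristic vector v_S ∈ ℝ^{S(n)} of S lies in the real span of the vectors v_{i,j} for i, j ∈ {1,…,n} (equivalently, v_S − (1/n)·1 lies in the span of the vectors v_{i,j} − (1/n)·1 for i, j ∈ {1,…,n−1}). -/

import Mathlib

/-!
A maximum intersecting family `A` meets every Latin square (`n` permutations that pairwise agree
nowhere) exactly once: every translate of `A` meets it at most once, and on average exactly once.
By Hall's theorem every family of pairwise nowhere-agreeing permutations extends to a Latin square,
so `A` contains a member of any such family `R` as soon as `R` covers a member of `A` pointwise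
(the added permutations then agree nowhere with that member). Translate so that `1 ∈ A` and let
`π ≠ 1` in `A` have the fewest fixed points. If some `σ ∈ A` moves a fixed point `x` of `π`,
three such families built by Hall's theorem produce a member of `A` whose fixed points are those of
`π` minus `x` (or, if `x` is the only one, a contradiction). So `A` fixes a common point, and
`A = {σ | σ i = j}` by counting; its characteristic vector is `v_{i,j}`.
-/

open Finset Equiv

namespace Equiv.Perm

variable {α : Type*}

-- adjacency in the derangement graph
def NowhereAgree (ρ σ : Perm α) : Prop := ∀ x, ρ x ≠ σ x

theorem NowhereAgree.symm {ρ σ : Perm α} (h : NowhereAgree ρ σ) : NowhereAgree σ ρ :=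
  fun x hx => h x hx.symm

instance : Std.Symm (NowhereAgree (α := α)) := ⟨fun _ _ => NowhereAgree.symm⟩

theorem nowhereAgree_of_forall_notMem (T : Finset α) {ρ σ : Perm α}
    (hT : ∀ j ∈ T, ρ j ≠ σ j) (hρ : ∀ j ∉ T, ρ j = j) (hσ : ∀ j ∉ T, σ j ≠ j) :
    NowhereAgree ρ σ := fun j => by
  by_cases hj : j ∈ T
  · exact hT j hj
  · rw [hρ j hj]
    exact (hσ j hj).symm

theorem nowhereAgree_of_forall_ne (x : α) {ρ σ : Perm α} (hx : ∀ j ≠ x, ρ j ≠ σ j)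
    (hρ : ρ x = x) (hσ : σ x ≠ x) : NowhereAgree ρ σ := fun j => by
  rcases eq_or_ne j x with rfl | hj
  · rw [hρ]
    exact hσ.symm
  · exact hx j hj

def IsIntersecting (A : Finset (Perm α)) : Prop := ∀ π ∈ A, ∀ σ ∈ A, ∃ i, π i = σ i

theorem IsIntersecting.not_nowhereAgree {A : Finset (Perm α)} (hA : IsIntersecting A)
    {π σ : Perm α} (hπ : π ∈ A) (hσ : σ ∈ A) : ¬NowhereAgree π σ := fun h => by
  obtain ⟨i, hi⟩ := hA π hπ σ hσ
  exact h i hi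

theorem IsIntersecting.image_mul_left [Fintype α] [DecidableEq α] {A : Finset (Perm α)}
    (hA : IsIntersecting A) (g : Perm α) : IsIntersecting (A.image (g * ·)) := by
  simp only [IsIntersecting, forall_mem_image, mul_apply, EmbeddingLike.apply_eq_iff_eq]
  exact hA

section Hall

variable [Fintype α] [DecidableEq α]

theorem exists_forall_apply_mem_of_hall (t : α → Finset α)
    (ht : ∀ s : Finset α, #s ≤ #(s.biUnion t)) : ∃ σ : Perm α, ∀ j, σ j ∈ t j := by
  obtain ⟨f, hf, hft⟩ := (all_card_le_biUnion_card_iff_exists_injective t).1 ht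
  exact ⟨ofBijective f (Finite.injective_iff_bijective.1 hf), hft⟩

theorem exists_forall_apply_notMem_of_card_le (B : α → Finset α) (k : ℕ)
    (hB : ∀ j, #(B j) ≤ k) (hB' : ∀ v, #{j | v ∈ B j} ≤ k) (hk : 2 * k ≤ Fintype.card α) :
    ∃ σ : Perm α, ∀ j, σ j ∉ B j := by
  obtain ⟨σ, hσ⟩ := exists_forall_apply_mem_of_hall (fun j => (B j)ᶜ) fun s => by
    obtain rfl | ⟨j₀, hj₀⟩ := s.eq_empty_or_nonempty
    · simp
    by_cases hs : #s + k ≤ Fintype.card α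
    · calc #s ≤ #(B j₀)ᶜ := by rw [card_compl]; have := hB j₀; omega
        _ ≤ _ := card_le_card (subset_biUnion_of_mem (fun j => (B j)ᶜ) hj₀)
    · -- `s` has more than `k` elements, so it is not inside `{j | v ∈ B j}`
      suffices s.biUnion (fun j => (B j)ᶜ) = univ by rw [this]; exact card_le_univ s
      refine eq_univ_of_forall fun v => ?_
      obtain ⟨j, hj, hvj⟩ := not_subset.1 fun h : s ⊆ ({j | v ∈ B j} : Finset α) => by
        have := card_le_card h; have := hB' v; have := card_le_univ s; omega
      exact mem_biUnion.2 ⟨j, hj, by simpa using hvj⟩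
  exact ⟨σ, fun j => mem_compl.1 (hσ j)⟩

theorem exists_forall_apply_mem_of_card_le (t : α → Finset α) (d : ℕ) (hd : 0 < d)
    (ht : ∀ j, d ≤ #(t j)) (ht' : ∀ v, #{j | v ∈ t j} ≤ d) :
    ∃ σ : Perm α, ∀ j, σ j ∈ t j := by
  refine exists_forall_apply_mem_of_hall t fun s => Nat.le_of_mul_le_mul_right ?_ hd
  refine card_mul_le_card_mul (fun j v => v ∈ t j) (fun j hj => ?_) fun v _ => ?_
  · refine (ht j).trans (card_le_card fun v hv => ?_)
    exact mem_filter.2 ⟨mem_biUnion.2 ⟨j, hj, hv⟩, hv⟩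
  · exact (card_le_card (filter_subset_filter _ (subset_univ s))).trans (ht' v)

end Hall

theorem exists_perm_supported_avoiding [DecidableEq α] (T : Finset α) (P : Finset (Perm α))
    (h : 2 * #P ≤ #T) :
    ∃ ρ : Perm α, (∀ j ∉ T, ρ j = j) ∧ ∀ j ∈ T, ρ j ∈ T ∧ ∀ β ∈ P, ρ j ≠ β j := by
  obtain ⟨σ, hσ⟩ := exists_forall_apply_notMem_of_card_le (α := T)
    (fun j => (P.image (· j)).subtype (· ∈ T)) #P
    (fun j => (card_subtype _ _).trans_le ((card_filter_le _ _).trans card_image_le))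
    (fun v => by
      refine (card_le_card_of_injOn (fun j => j.1) (t := P.image (·⁻¹ v.1)) (fun j hj => ?_)
        Subtype.val_injective.injOn).trans card_image_le
      simp only [coe_filter, mem_univ, true_and, Set.mem_ofPred_eq, mem_subtype, mem_image]
        at hj
      obtain ⟨β, hβ, hβj⟩ := hj
      exact mem_image.2 ⟨β, hβ, by rw [← hβj]; simp⟩)
    (by rwa [Fintype.card_coe])
  refine ⟨ofSubtype σ, fun j hj => ofSubtype_apply_of_not_mem σ hj, fun j hj => ?_⟩
  rw [ofSubtype_apply_of_mem σ hj]
  refine ⟨(σ ⟨j, hj⟩).2, fun β hβ hβj => hσ ⟨j, hj⟩ ?_⟩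
  simp only [mem_subtype, mem_image]
  exact ⟨β, hβ, hβj.symm⟩

section Latin

variable [Fintype α] [DecidableEq α]

theorem exists_forall_nowhereAgree_of_card_lt {R : Finset (Perm α)}
    (hR : (R : Set (Perm α)).Pairwise NowhereAgree) (hlt : #R < Fintype.card α) :
    ∃ τ : Perm α, ∀ ρ ∈ R, NowhereAgree τ ρ := by
  have hinj : ∀ j, Set.InjOn (fun ρ : Perm α => ρ j) R := fun j ρ hρ ρ' hρ' h =>
    by_contra fun hne => hR hρ hρ' hne j h
  have hcount : ∀ v, #R ≤ #{j | v ∈ R.image (· j)} := fun v => by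
    refine card_le_card_of_injOn (fun ρ => ρ⁻¹ v) (fun ρ hρ => ?_) fun ρ hρ ρ' hρ' h => ?_
    · simp only [coe_filter, mem_univ, true_and, Set.mem_ofPred_eq, mem_image]
      exact ⟨ρ, hρ, by simp⟩
    · refine by_contra fun hne => hR hρ hρ' hne (ρ⁻¹ v) ?_
      simp only at h
      rw [show ρ (ρ⁻¹ v) = v by simp, h]
      simp
  obtain ⟨τ, hτ⟩ := exists_forall_apply_mem_of_card_le (fun j => (R.image (· j))ᶜ)
    (Fintype.card α - #R) (by omega)
    (fun j => by rw [card_compl, card_image_of_injOn (hinj j)])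
    (fun v => by
      have := card_filter_add_card_filter_not (s := univ) (fun j => v ∈ R.image (· j))
      simp only [mem_compl, card_univ] at this ⊢
      have := hcount v
      omega)
  exact ⟨τ, fun ρ hρ j h => mem_compl.1 (hτ j) (mem_image.2 ⟨ρ, hρ, h.symm⟩)⟩

theorem exists_superset_card_eq_pairwise_nowhereAgree {R : Finset (Perm α)}
    (hR : (R : Set (Perm α)).Pairwise NowhereAgree) (hcard : #R ≤ Fintype.card α) :
    ∃ K, R ⊆ K ∧ #K = Fintype.card α ∧ (K : Set (Perm α)).Pairwise NowhereAgree := by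
  induction h : Fintype.card α - #R generalizing R with
  | zero => exact ⟨R, Subset.rfl, by omega, hR⟩
  | succ k ih =>
    obtain ⟨τ, hτ⟩ := exists_forall_nowhereAgree_of_card_lt hR (by omega)
    have hτR : τ ∉ R := fun hτR =>
      have : Nonempty α := Fintype.card_pos_iff.1 (by omega)
      hτ τ hτR (Classical.arbitrary α) rfl
    obtain ⟨K, hRK, hK⟩ := ih (R := insert τ R)
      (by rw [coe_insert, Set.pairwise_insert_of_symm]; exact ⟨hR, fun ρ hρ _ => hτ ρ hρ⟩)
      (by rw [card_insert_of_notMem hτR]; omega) (by rw [card_insert_of_notMem hτR]; omega)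
    exact ⟨K, (subset_insert τ R).trans hRK, hK⟩

theorem IsIntersecting.exists_mem_of_card_eq [Nonempty α] {A K : Finset (Perm α)}
    (hA : IsIntersecting A) (hAcard : #A = (Fintype.card α - 1).factorial)
    (hK : (K : Set (Perm α)).Pairwise NowhereAgree) (hKcard : #K = Fintype.card α) :
    ∃ ρ ∈ K, ρ ∈ A := by
  -- each translate `s⁻¹ A` meets the Latin square `K` at most once, and on average exactly once
  set f : Perm α → ℕ := fun s => #{ρ ∈ K | s * ρ ∈ A}
  have hf : ∀ s, f s ≤ 1 := fun s => card_le_one.2 fun ρ hρ ρ' hρ' => by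
    rw [mem_filter] at hρ hρ'
    obtain ⟨i, hi⟩ := hA _ hρ.2 _ hρ'.2
    exact by_contra fun hne => hK hρ.1 hρ'.1 hne i (s.injective hi)
  have hsum : ∑ s, f s = ∑ _s : Perm α, 1 := by
    calc ∑ s, f s = ∑ ρ ∈ K, #{s | s * ρ ∈ A} := by simp only [f, card_filter]; exact sum_comm
      _ = ∑ _ρ ∈ K, #A := sum_congr rfl fun ρ _ => card_nbij' (· * ρ) (· * ρ⁻¹)
          (fun s hs => by simpa using hs) (fun s hs => by simpa using hs)
          (fun s _ => by simp) (fun s _ => by simp)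
      _ = ∑ _s : Perm α, 1 := by
          rw [sum_const, sum_const, hKcard, hAcard, smul_eq_mul, smul_eq_mul, mul_one, card_univ,
            Fintype.card_perm, Nat.mul_factorial_pred Fintype.card_ne_zero]
  have hf1 : f 1 = 1 := (sum_eq_sum_iff_of_le fun s _ => hf s).1 hsum 1 (mem_univ 1)
  obtain ⟨ρ, hρ⟩ := card_pos.1 (hf1 ▸ one_pos : 0 < f 1)
  rw [mem_filter, one_mul] at hρ
  exact ⟨ρ, hρ⟩

theorem IsIntersecting.exists_mem_of_forall_exists_apply_eq [Nonempty α] {A R : Finset (Perm α)}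
    (hA : IsIntersecting A) (hAcard : #A = (Fintype.card α - 1).factorial)
    (hR : (R : Set (Perm α)).Pairwise NowhereAgree) (hRcard : #R ≤ Fintype.card α)
    {π : Perm α} (hπ : π ∈ A) (hcover : ∀ i, ∃ ρ ∈ R, ρ i = π i) : ∃ ρ ∈ R, ρ ∈ A := by
  obtain ⟨K, hRK, hKcard, hK⟩ := exists_superset_card_eq_pairwise_nowhereAgree hR hRcard
  obtain ⟨ρ, hρK, hρA⟩ := hA.exists_mem_of_card_eq hAcard hK hKcard
  by_cases hρR : ρ ∈ R
  · exact ⟨ρ, hρR, hρA⟩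
  refine absurd (fun i => ?_) (hA.not_nowhereAgree hρA hπ)
  obtain ⟨ρ', hρ', hi⟩ := hcover i
  rw [← hi]
  exact hK hρK (hRK hρ') (ne_of_mem_of_not_mem hρ' hρR).symm i

end Latin

section CommonFixedPoint

variable [Fintype α] [DecidableEq α] {A : Finset (Perm α)}

theorem IsIntersecting.mem_of_covers_of_nowhereAgree [Nonempty α] (hA : IsIntersecting A)
    (hAcard : #A = (Fintype.card α - 1).factorial) (h3 : 3 ≤ Fintype.card α)
    {a b c π β γ : Perm α} (hab : NowhereAgree a b) (hac : NowhereAgree a c)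
    (hbc : NowhereAgree b c) (hπ : π ∈ A) (hcover : ∀ i, a i = π i ∨ b i = π i ∨ c i = π i)
    (hβ : β ∈ A) (hbβ : NowhereAgree b β) (hγ : γ ∈ A) (hcγ : NowhereAgree c γ) : a ∈ A := by
  have hR : (({a, b, c} : Finset (Perm α)) : Set (Perm α)).Pairwise NowhereAgree := by
    simp only [coe_insert, coe_singleton, Set.pairwise_insert_of_symm, Set.pairwise_singleton,
      Set.mem_insert_iff, Set.mem_singleton_iff, forall_eq_or_imp, forall_eq]
    exact ⟨⟨trivial, fun _ => hbc⟩, fun _ => hab, fun _ => hac⟩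
  obtain ⟨ρ, hρ, hρA⟩ := hA.exists_mem_of_forall_exists_apply_eq hAcard hR
    (card_le_three.trans h3) hπ fun i => by simpa using hcover i
  simp only [mem_insert, mem_singleton] at hρ
  rcases hρ with rfl | rfl | rfl
  · exact hρA
  · exact absurd hbβ (hA.not_nowhereAgree hρA hβ)
  · exact absurd hcγ (hA.not_nowhereAgree hρA hγ)

theorem IsIntersecting.exists_mem_support_eq_insert (hA : IsIntersecting A)
    (hAcard : #A = (Fintype.card α - 1).factorial) (h7 : 7 ≤ Fintype.card α) (h1 : 1 ∈ A)
    {π σ : Perm α} (hπ : π ∈ A) (hπ1 : π ≠ 1) {x : α} (hx : x ∉ π.support)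
    (hF : 2 ≤ #π.supportᶜ) (hσ : σ ∈ A) (hσx : σ x ≠ x) :
    ∃ τ ∈ A, τ.support = insert x π.support := by
  have : Nonempty α := ⟨x⟩
  set M := π.support
  have hM : #M ≠ 0 := card_support_eq_zero.not.2 hπ1
  obtain ⟨τ, hτfix, hτ⟩ := exists_perm_supported_avoiding (insert x M) {1}
    (by rw [card_singleton, card_insert_of_notMem hx]; omega)
  obtain ⟨μ, hμfix, hμ⟩ := exists_perm_supported_avoiding Mᶜ {1} (by rwa [card_singleton])
  obtain ⟨ν, hνfix, hν⟩ := exists_perm_supported_avoiding {x}ᶜ {τ, μ, σ}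
    (by rw [card_compl, card_singleton]; have := card_le_three (a := τ) (b := μ) (c := σ); omega)
  simp only [mem_singleton, forall_eq, one_apply] at hτ hμ
  simp only [mem_compl, mem_singleton, not_not, forall_eq] at hνfix hν
  have hτx : τ x ≠ x := (hτ x (mem_insert_self x M)).2
  have hμM : ∀ j ∈ M, μ j = j := fun j hj => hμfix j (notMem_compl.2 hj)
  have hτμ : NowhereAgree τ μ := by
    refine nowhereAgree_of_forall_notMem (insert x M) (fun j hj => ?_) hτfix
      fun j hj => (hμ j (mem_compl.2 fun h => hj (mem_insert_of_mem h))).2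
    rcases eq_or_ne j x with rfl | hjx
    · -- `τ` maps `j` into `M`, while `μ` maps it into `Mᶜ`
      have hτM : τ j ∈ M := mem_of_mem_insert_of_ne (hτ j hj).1 hτx
      exact fun h => mem_compl.1 (hμ j (mem_compl.2 hx)).1 (h ▸ hτM)
    · rw [hμM j (mem_of_mem_insert_of_ne hj hjx)]
      exact (hτ j hj).2
  have hντ : NowhereAgree ν τ :=
    nowhereAgree_of_forall_ne x (fun j hj => (hν j hj).2 τ (by simp)) hνfix hτx
  have hνμ : NowhereAgree ν μ :=
    nowhereAgree_of_forall_ne x (fun j hj => (hν j hj).2 μ (by simp)) hνfix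
      (hμ x (mem_compl.2 hx)).2
  have hνσ : NowhereAgree ν σ :=
    nowhereAgree_of_forall_ne x (fun j hj => (hν j hj).2 σ (by simp)) hνfix hσx
  have hμπ : NowhereAgree μ π :=
    nowhereAgree_of_forall_notMem Mᶜ
      (fun j hj => by rw [notMem_support.1 (mem_compl.1 hj)]; exact (hμ j hj).2)
      hμfix fun j hj => mem_support.1 (notMem_compl.1 hj)
  refine ⟨τ, hA.mem_of_covers_of_nowhereAgree hAcard (by omega) hτμ hντ.symm hνμ.symm h1
    (fun i => ?_) hπ hμπ hσ hνσ, ?_⟩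
  · by_cases hix : i = x
    · exact .inr (.inr (hix ▸ hνfix))
    by_cases hiM : i ∈ M
    · exact .inr (.inl (hμM i hiM))
    · exact .inl (hτfix i (by simp [hix, hiM]))
  · ext j
    rw [mem_support]
    exact ⟨fun h => by_contra fun hj => h (hτfix j hj), fun hj => (hτ j hj).2⟩

theorem IsIntersecting.apply_eq_self_of_support_eq_compl_singleton (hA : IsIntersecting A)
    (hAcard : #A = (Fintype.card α - 1).factorial) (h7 : 7 ≤ Fintype.card α) (h1 : 1 ∈ A)
    {π σ : Perm α} {y : α} (hπ : π ∈ A) (hπy : π.support = {y}ᶜ) (hσ : σ ∈ A) : σ y = y := by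
  have : Nonempty α := ⟨y⟩
  by_contra hσy
  have hπfix : ∀ j, π j = j ↔ j = y := fun j => by
    rw [← notMem_support, hπy, mem_compl, not_not, mem_singleton]
  obtain ⟨M, hMy, hMcard⟩ := exists_subset_card_eq (s := {y}ᶜ) (n := 3)
    (by rw [card_compl, card_singleton]; omega)
  have hyM : y ∉ M := fun h => by simpa using hMy h
  obtain ⟨r₁, hr₁fix, hr₁⟩ := exists_perm_supported_avoiding Mᶜ {1, π}
    (by rw [card_compl, hMcard]; have := card_le_two (a := (1 : Perm α)) (b := π); omega)
  obtain ⟨r₂, hr₂fix, hr₂⟩ := exists_perm_supported_avoiding (insert y M) {π, r₁}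
    (by rw [card_insert_of_notMem hyM, hMcard]; have := card_le_two (a := π) (b := r₁); omega)
  obtain ⟨τ, hτfix, hτ⟩ := exists_perm_supported_avoiding {y}ᶜ {r₁, r₂, σ}
    (by rw [card_compl, card_singleton]; have := card_le_three (a := r₁) (b := r₂) (c := σ); omega)
  simp only [mem_compl, mem_singleton, not_not, forall_eq] at hτfix hτ
  have hr₁y : r₁ y ≠ y := (hr₁ y (mem_compl.2 hyM)).2 1 (by simp)
  have hr₂y : r₂ y ≠ y := by
    simpa [(hπfix y).2 rfl] using (hr₂ y (mem_insert_self y M)).2 π (by simp)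
  have hτr₁ := nowhereAgree_of_forall_ne y (fun j hj => (hτ j hj).2 r₁ (by simp)) hτfix hr₁y
  have hτr₂ := nowhereAgree_of_forall_ne y (fun j hj => (hτ j hj).2 r₂ (by simp)) hτfix hr₂y
  have hτσ := nowhereAgree_of_forall_ne y (fun j hj => (hτ j hj).2 σ (by simp)) hτfix hσy
  have hr₂r₁ : NowhereAgree r₂ r₁ :=
    nowhereAgree_of_forall_notMem (insert y M) (fun j hj => (hr₂ j hj).2 r₁ (by simp)) hr₂fix
      fun j hj => (hr₁ j (mem_compl.2 fun h => hj (mem_insert_of_mem h))).2 1 (by simp)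
  have hr₁π : NowhereAgree r₁ π :=
    nowhereAgree_of_forall_notMem Mᶜ (fun j hj => (hr₁ j hj).2 π (by simp)) hr₁fix
      fun j hj h => hyM ((hπfix j).1 h ▸ notMem_compl.1 hj)
  have hr₂π : NowhereAgree r₂ π :=
    nowhereAgree_of_forall_notMem (insert y M) (fun j hj => (hr₂ j hj).2 π (by simp)) hr₂fix
      fun j hj h => hj ((hπfix j).1 h ▸ mem_insert_self y M)
  refine hA.not_nowhereAgree (hA.mem_of_covers_of_nowhereAgree hAcard (by omega) hτr₁ hτr₂
    hr₂r₁.symm h1 (fun i => ?_) hπ hr₁π hπ hr₂π) hσ hτσ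
  by_cases hiy : i = y
  · exact .inl (hiy ▸ hτfix)
  by_cases hiM : i ∈ M
  · exact .inr (.inl (hr₁fix i (notMem_compl.2 hiM)))
  · exact .inr (.inr (hr₂fix i (by simp [hiy, hiM])))

theorem IsIntersecting.exists_forall_apply_eq_self (hA : IsIntersecting A)
    (hAcard : #A = (Fintype.card α - 1).factorial) (h7 : 7 ≤ Fintype.card α) (h1 : 1 ∈ A) :
    ∃ y, ∀ σ ∈ A, σ y = y := by
  -- a member `π ≠ 1` with the fewest fixed points: its fixed points are fixed by all of `A`
  obtain ⟨π, hπ, hmax⟩ := exists_max_image (A.erase 1) (fun π => #π.support) <| by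
    rw [← card_pos, card_erase_of_mem h1, hAcard]
    have := Nat.self_le_factorial (Fintype.card α - 1)
    omega
  obtain ⟨hπ1, hπA⟩ := mem_erase.1 hπ
  obtain ⟨y, hy⟩ : ∃ y, y ∉ π.support := by
    obtain ⟨i, hi⟩ := hA π hπA 1 h1
    exact ⟨i, notMem_support.2 hi⟩
  refine ⟨y, fun σ hσ => by_contra fun hσy => ?_⟩
  by_cases hF : 2 ≤ #π.supportᶜ
  · obtain ⟨τ, hτA, hτ⟩ := hA.exists_mem_support_eq_insert hAcard h7 h1 hπA hπ1 hy hF hσ hσy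
    have hτ1 : τ ≠ 1 := fun h => insert_ne_empty y π.support (by rw [← hτ, h, support_one])
    have := hmax τ (mem_erase.2 ⟨hτ1, hτA⟩)
    rw [hτ, card_insert_of_notMem hy] at this
    omega
  · have : π.support = {y}ᶜ := by
      rw [← compl_compl π.support, compl_inj_iff, eq_singleton_iff_unique_mem]
      exact ⟨mem_compl.2 hy, fun z hz => card_le_one.1 (by omega) z hz y (mem_compl.2 hy)⟩
    exact hσy (hA.apply_eq_self_of_support_eq_compl_singleton hAcard h7 h1 hπA this hσ)

end CommonFixedPoint

theorem card_filter_apply_eq [Fintype α] [DecidableEq α] (i j : α) :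
    #{σ : Perm α | σ i = j} = (Fintype.card α - 1).factorial := by
  have hstab : #{σ : Perm α | σ i = i} = (Fintype.card α - 1).factorial := by
    rw [← Fintype.card_subtype, ← Set.card_ne_eq i, ← Fintype.card_perm]
    exact Fintype.card_congr ((Equiv.Perm.subtypeEquivSubtypePerm (· ≠ i)).trans
      (Equiv.subtypeEquivRight fun σ => by simp)).symm
  rw [← hstab]
  exact card_nbij' (swap i j * ·) (swap i j * ·) (fun σ hσ => by simp_all) (fun σ hσ => by simp_all)
    (fun σ _ => swap_mul_self_mul i j σ) (fun σ _ => swap_mul_self_mul i j σ)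

theorem IsIntersecting.exists_eq_filter_apply_eq [Fintype α] [DecidableEq α]
    {A : Finset (Perm α)} (hA : IsIntersecting A)
    (hAcard : #A = (Fintype.card α - 1).factorial) (h7 : 7 ≤ Fintype.card α) :
    ∃ i j, A = ({σ | σ i = j} : Finset (Perm α)) := by
  obtain ⟨σ₀, hσ₀⟩ : A.Nonempty := card_pos.1 (hAcard ▸ Nat.factorial_pos _)
  obtain ⟨y, hy⟩ := (hA.image_mul_left σ₀⁻¹).exists_forall_apply_eq_self
    (by rw [card_image_of_injective _ (mul_right_injective _), hAcard]) h7
    (mem_image.2 ⟨σ₀, hσ₀, inv_mul_cancel σ₀⟩)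
  refine ⟨y, σ₀ y, eq_of_subset_of_card_le (fun σ hσ => ?_)
    (hAcard ▸ card_filter_apply_eq y (σ₀ y)).le⟩
  have := hy _ (mem_image_of_mem _ hσ)
  rw [mul_apply, inv_eq_iff_eq] at this
  simpa using this

end Equiv.Perm

/-- Let `n > 6` and let `S` be an intersecting family of permutations of `{1,…,n}`
with `|S| = (n-1)!`. Then the characteristic vector of `S` lies in the real span of
the characteristic vectors `v_{i,j}` of the sets `S_{i,j} = {π : π i = j}`,
`i, j ∈ {1,…,n}`. -/
theorem max_intersecting_family_char_vector_in_span (n : ℕ) (hn : 6 < n)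
    (S : Finset (Equiv.Perm (Fin n)))
    (hS : ∀ π ∈ S, ∀ σ ∈ S, ∃ i : Fin n, π i = σ i)
    (hcard : S.card = (n - 1).factorial) :
    (fun π : Equiv.Perm (Fin n) => if π ∈ S then (1 : ℝ) else 0)
      ∈ Submodule.span ℝ
          (Set.range (fun p : Fin n × Fin n => fun π : Equiv.Perm (Fin n) =>
            if π p.1 = p.2 then (1 : ℝ) else 0)) := by
  obtain ⟨i, j, rfl⟩ := Equiv.Perm.IsIntersecting.exists_eq_filter_apply_eq hS
    (by rwa [Fintype.card_fin]) (by rwa [Fintype.card_fin])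
  exact Submodule.subset_span ⟨(i, j), funext fun π => by simp⟩
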